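/- An edge refinement of a graph changes the parity of the degree of a vertex v if and only if v is a common neighbor of the two endpoints of the refined edge. -/

import Mathlib

def edgeRefine {V : Type*} [DecidableEq V] (G : SimpleGraph V) (a b : V) :
    SimpleGraph (V ⊕ Unit) where
  Adj x y :=
    match x, y with
    | Sum.inl u, Sum.inl v => G.Adj u v ∧ ¬((u = a ∧ v = b) ∨ (u = b ∧ v = a))
    | Sum.inl u, Sum.inr _ => u = a ∨ u = b ∨ (G.Adj a u ∧ G.Adj b u)
    | Sum.inr _, Sum.inl v => v = a ∨ v = b ∨ (G.Adj a v ∧ G.Adj b v)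
    | Sum.inr _, Sum.inr _ => False
  symm := by
    constructor
    rintro (u | u) (v | v) h <;> dsimp only at h ⊢ <;>
      first
        | exact ⟨h.1.symm, fun hc => h.2 (by tauto)⟩
        | exact h
  loopless := by
    constructor
    rintro (u | u) h <;> dsimp only at h <;>
      first
        | exact G.irrefl h.1
        | exact h

instance edgeRefine.decidableAdj {V : Type*} [DecidableEq V] (G : SimpleGraph V)
    [DecidableRel G.Adj] (a b : V) : DecidableRel (edgeRefine G a b).Adj := by
  rintro (u | u) (v | v) <;> dsimp [edgeRefine] <;> infer_instance

/-- An edge refinement changes the parity of the degree of an (original) vertex `v`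
if and only if `v` is a common neighbor of the endpoints `a`, `b` of the refined edge. -/
theorem stmt_5 {V : Type*} [Fintype V] [DecidableEq V] (G : SimpleGraph V)
    [DecidableRel G.Adj] (a b : V) (hab : G.Adj a b) (v : V) :
    (edgeRefine G a b).degree (Sum.inl v) % 2 ≠ G.degree v % 2 ↔
      (G.Adj a v ∧ G.Adj b v) := by
  classical
  have hne : a ≠ b := hab.ne
  set N := (edgeRefine G a b).neighborFinset (Sum.inl v) with hN
  have hdeg : (edgeRefine G a b).degree (Sum.inl v) = N.toLeft.card + N.toRight.card := by
    rw [SimpleGraph.degree, Finset.card_toLeft_add_card_toRight]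
  have hL : N.toLeft =
      Finset.univ.filter (fun u => G.Adj v u ∧ ¬((v = a ∧ u = b) ∨ (v = b ∧ u = a))) := by
    ext u
    simp only [hN, Finset.mem_toLeft, Finset.mem_filter, Finset.mem_univ, true_and, SimpleGraph.mem_neighborFinset]
    simp [edgeRefine]
  have hR : N.toRight.card =
      if v = a ∨ v = b ∨ (G.Adj a v ∧ G.Adj b v) then 1 else 0 := by
    have : N.toRight = if v = a ∨ v = b ∨ (G.Adj a v ∧ G.Adj b v) then {()} else ∅ := by
      ext u
      by_cases h : v = a ∨ v = b ∨ (G.Adj a v ∧ G.Adj b v) <;>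
        simp [hN, SimpleGraph.mem_neighborFinset] <;> simp [edgeRefine, h]
    rw [this]; split <;> simp
  have hGdeg : G.degree v = (Finset.univ.filter (G.Adj v)).card := by
    rw [SimpleGraph.degree, SimpleGraph.neighborFinset_eq_filter]
  by_cases hva : v = a
  · subst hva
    have hLcard : N.toLeft.card = G.degree v - 1 := by
      rw [hL, hGdeg]
      have : (Finset.univ.filter (fun u => G.Adj v u ∧ ¬((v = v ∧ u = b) ∨ (v = b ∧ u = v))))
          = (Finset.univ.filter (G.Adj v)).erase b := by
        ext u
        simp only [Finset.mem_filter, Finset.mem_erase, Finset.mem_univ, true_and]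
        tauto
      rw [this, Finset.card_erase_of_mem (by simp [hab])]
    have hge : 1 ≤ G.degree v := by
      rw [hGdeg]
      exact Finset.card_pos.mpr ⟨b, by simp [hab]⟩
    have : (edgeRefine G v b).degree (Sum.inl v) = G.degree v := by
      rw [hdeg, hLcard, hR]
      simp
      omega
    rw [this]
    simp [G.irrefl (v := v)]
  · by_cases hvb : v = b
    · subst hvb
      have hLcard : N.toLeft.card = G.degree v - 1 := by
        rw [hL, hGdeg]
        have : (Finset.univ.filter (fun u => G.Adj v u ∧ ¬((v = a ∧ u = v) ∨ (v = v ∧ u = a))))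
            = (Finset.univ.filter (G.Adj v)).erase a := by
          ext u
          simp only [Finset.mem_filter, Finset.mem_erase, Finset.mem_univ, true_and]
          tauto
        rw [this, Finset.card_erase_of_mem (by simp [hab.symm])]
      have hge : 1 ≤ G.degree v := by
        rw [hGdeg]
        exact Finset.card_pos.mpr ⟨a, by simp [hab.symm]⟩
      have : (edgeRefine G a v).degree (Sum.inl v) = G.degree v := by
        rw [hdeg, hLcard, hR]
        simp
        omega
      rw [this]
      simp [G.irrefl (v := v)]
    · have hLcard : N.toLeft.card = G.degree v := by
        rw [hL, hGdeg]
        congr 1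
        ext u
        simp only [Finset.mem_filter, Finset.mem_univ, true_and, and_iff_left_iff_imp]
        rintro - (⟨h, -⟩ | ⟨h, -⟩) <;> [exact hva h; exact hvb h]
      rw [hdeg, hLcard, hR]
      by_cases hc : G.Adj a v ∧ G.Adj b v
      · simp only [hc, hva, hvb, false_or, or_true, if_true]
        simp [hc]
        omega
      · simp only [hva, hvb, hc, or_self, false_or, if_false]
        simp [hc]
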